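/- arXiv:1306.6362 — 5 statements merged into one kernel-verified Lean document; each statement's English description precedes it below -/
import Mathlib

section
/- Let P ∈ ℂ[x_1, …, x_n] be a polynomial such that every zero (x_1, …, x_n) ∈ ℂ^n of P satisfies x_1 ⋯ x_n = 0. Then P is a monomial: P = c·x_1^{d_1} ⋯ x_n^{d_n} for some nonzero c ∈ ℂ and nonnegative integers d_1, …, d_n. -/
/-! By the Nullstellensatz, some power of `x₁ ⋯ xₙ` is divisible by `P`. Over a domain
the divisors of a monomial are monomials with a unit coefficient, here a nonzero constant. -/

open MvPolynomial

namespace MvPolynomial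

variable {σ R : Type*}

theorem exists_dvd_pow_of_forall_eval_eq_zero [Field R] [IsAlgClosed R] [Finite σ]
    {P Q : MvPolynomial σ R} (h : ∀ x : σ → R, eval x P = 0 → eval x Q = 0) :
    ∃ k : ℕ, P ∣ Q ^ k := by
  have hQ : Q ∈ (Ideal.span {P}).radical := by
    rw [← vanishingIdeal_zeroLocus_eq_radical (K := R)]
    exact fun x hx => h x (hx P (Ideal.subset_span rfl))
  obtain ⟨k, hk⟩ := Ideal.mem_radical_iff.mp hQ
  exact ⟨k, Ideal.mem_span_singleton.mp hk⟩

theorem exists_eq_C_mul_prod_X_pow_of_dvd_prod_X_pow [CommRing R] [NoZeroDivisors R] [Fintype σ]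
    {P : MvPolynomial σ R} {d : σ → ℕ} (h : P ∣ ∏ i, X i ^ d i) :
    ∃ u : R, IsUnit u ∧ ∃ e : σ → ℕ, P = C u * ∏ i, X i ^ e i := by
  rw [prod_X_pow, dvd_monomial_one_iff_exists] at h
  obtain ⟨m, u, -, hu, rfl⟩ := h
  exact ⟨u, hu, m, by rw [monomial_eq, Finsupp.prod_fintype _ _ (fun _ => pow_zero _)]⟩

end MvPolynomial

theorem stmt5 (n : ℕ) (P : MvPolynomial (Fin n) ℂ)
    (h : ∀ x : Fin n → ℂ, eval x P = 0 → ∏ i, x i = 0) :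
    ∃ c : ℂ, c ≠ 0 ∧ ∃ d : Fin n → ℕ,
      P = MvPolynomial.C c * ∏ i, MvPolynomial.X i ^ d i := by
  obtain ⟨k, hk⟩ := exists_dvd_pow_of_forall_eval_eq_zero (P := P) (Q := ∏ i, X i)
    (by simpa only [map_prod, eval_X] using h)
  rw [← Finset.prod_pow] at hk
  obtain ⟨c, hc, d, hP⟩ := exists_eq_C_mul_prod_X_pow_of_dvd_prod_X_pow hk
  exact ⟨c, hc.ne_zero, d, hP⟩
end

section
/- Let P ∈ ℂ[x_1, …, x_n] be a nonzero polynomial and y ∈ ℂ^n a zero of P. For any ε > 0 there exists δ > 0 such that any polynomial Q obtained from P by changing each nonzero coefficient of P by at most δ (in absolute value), and keeping the zero coefficients zero, has a zero z ∈ ℂ^n with |y − z| < ε. -/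
/-!
Restrict `Q` to the line `t ↦ y + t • v`, where `v` is chosen so that the top-degree homogeneous
part `P_D` of `P` does not vanish at `v`. When `Q` has the same support as `P`, this restriction is
a univariate polynomial of degree `D` whose leading coefficient `Q_D(v)` is close to `P_D(v) ≠ 0`
and whose constant term `Q(y)` is close to `P(y) = 0`. The product of its roots has modulus
`‖Q(y)‖ / ‖Q_D(v)‖`, so one root `t` has `‖t‖ ^ D` at most this small ratio, and `y + t • v` is the
required zero of `Q`.
-/

open MvPolynomial

/-- Euclidean norm on `Fin n → ℂ`. -/
noncomputable def eucNorm {n : ℕ} (v : Fin n → ℂ) : ℝ :=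
  Real.sqrt (∑ i, ‖v i‖ ^ 2)

namespace Polynomial

theorem exists_isRoot_norm_lt_of_norm_eval_zero_lt {K : Type*} [NormedField K]
    [IsAlgClosed K] {q : K[X]} {c : ℝ} (hc : 0 ≤ c)
    (h : ‖q.eval 0‖ < c ^ q.natDegree * ‖q.leadingCoeff‖) :
    ∃ r, q.IsRoot r ∧ ‖r‖ < c := by
  by_contra! hroots
  have hprod : c ^ q.natDegree ≤ (q.roots.map (‖·‖)).prod :=
    calc c ^ q.natDegree = (q.roots.map fun _ => c).prod := by
          simp [IsAlgClosed.card_roots_eq_natDegree]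
      _ ≤ _ := Multiset.prod_map_le_prod_map₀ _ _ (fun _ _ => hc) fun r hr =>
          hroots r (isRoot_of_mem_roots hr)
  have heval : ‖q.eval 0‖ = (q.roots.map (‖·‖)).prod * ‖q.leadingCoeff‖ := by
    rw [(IsAlgClosed.splits q).eval_eq_prod_roots, norm_mul, mul_comm]
    congr 1
    simpa using map_multiset_prod (normHom : K →*₀ ℝ) q.roots
  rw [heval] at h
  exact h.not_ge (mul_le_mul_of_nonneg_right hprod (norm_nonneg _))

theorem coeff_prod_of_natDegree_le_sum {R ι : Type*} [CommSemiring R] (s : Finset ι)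
    (f : ι → R[X]) (n : ι → ℕ) (h : ∀ i ∈ s, (f i).natDegree ≤ n i) :
    (∏ i ∈ s, f i).coeff (∑ i ∈ s, n i) = ∏ i ∈ s, (f i).coeff (n i) := by
  classical
  induction s using Finset.induction_on with
  | empty => simp
  | insert a s ha ih =>
    rw [Finset.forall_mem_insert] at h
    rw [Finset.prod_insert ha, Finset.sum_insert ha, Finset.prod_insert ha,
      coeff_mul_add_eq_of_natDegree_le h.1
        ((natDegree_prod_le _ _).trans (Finset.sum_le_sum h.2)), ih h.2]

end Polynomial

namespace MvPolynomial

open Polynomial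

section LineRestriction

variable {R σ : Type*} [CommSemiring R] (y v : σ → R)

noncomputable def restrictToLine : MvPolynomial σ R →ₐ[R] R[X] :=
  aeval fun i => Polynomial.C (v i) * Polynomial.X + Polynomial.C (y i)

theorem eval_restrictToLine (Q : MvPolynomial σ R) (t : R) :
    (restrictToLine y v Q).eval t = eval (y + t • v) Q := by
  induction Q using MvPolynomial.induction_on with
  | C a => simp [restrictToLine]
  | add p q hp hq => simp [hp, hq]
  | mul_X p i hp =>
    simp only [restrictToLine, map_mul, aeval_X, eval_X, Polynomial.eval_mul, Polynomial.eval_add,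
      Polynomial.eval_C, Polynomial.eval_X, Pi.add_apply, Pi.smul_apply, smul_eq_mul] at hp ⊢
    rw [hp]
    ring

theorem restrictToLine_monomial (d : σ →₀ ℕ) (c : R) :
    restrictToLine y v (monomial d c) =
      Polynomial.C c *
        ∏ i ∈ d.support, (Polynomial.C (v i) * Polynomial.X + Polynomial.C (y i)) ^ d i :=
  aeval_monomial _ _ _

theorem natDegree_restrictToLine_monomial_le (d : σ →₀ ℕ) (c : R) :
    (restrictToLine y v (monomial d c)).natDegree ≤ d.degree := by
  rw [restrictToLine_monomial]
  exact natDegree_C_mul_le _ _ |>.trans <| (natDegree_prod_le _ _).trans <| Finset.sum_le_sum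
    fun i _ => (natDegree_pow_le_of_le _ natDegree_linear_le).trans_eq (mul_one _)

theorem coeff_restrictToLine_monomial_degree (d : σ →₀ ℕ) (c : R) :
    (restrictToLine y v (monomial d c)).coeff d.degree = eval v (monomial d c) := by
  rw [restrictToLine_monomial, Polynomial.coeff_C_mul, Finsupp.degree_apply,
    coeff_prod_of_natDegree_le_sum _ _ _ fun i _ =>
      (natDegree_pow_le_of_le _ natDegree_linear_le).trans_eq (mul_one _), eval_monomial]
  congr 1
  refine Finset.prod_congr rfl fun i _ => ?_
  simpa using coeff_pow_of_natDegree_le (m := d i) (natDegree_linear_le (a := v i) (b := y i))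

theorem natDegree_restrictToLine_le (Q : MvPolynomial σ R) :
    (restrictToLine y v Q).natDegree ≤ Q.totalDegree := by
  conv_lhs => rw [Q.as_sum, map_sum]
  exact natDegree_sum_le_of_forall_le _ _ fun d hd =>
    (natDegree_restrictToLine_monomial_le y v d _).trans (le_totalDegree hd)

theorem coeff_restrictToLine_of_totalDegree_le {Q : MvPolynomial σ R} {D : ℕ}
    (hD : Q.totalDegree ≤ D) :
    (restrictToLine y v Q).coeff D = eval v (homogeneousComponent D Q) := by
  classical
  rw [homogeneousComponent_apply, map_sum, Finset.sum_filter]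
  conv_lhs => rw [Q.as_sum, map_sum, finsetSum_coeff]
  refine Finset.sum_congr rfl fun d hd => ?_
  split_ifs with hdD
  · rw [← hdD, coeff_restrictToLine_monomial_degree]
  · exact coeff_eq_zero_of_natDegree_lt <| (natDegree_restrictToLine_monomial_le y v d _).trans_lt <|
      (le_totalDegree hd |>.trans hD).lt_of_ne hdD

end LineRestriction

variable {σ : Type*}

theorem homogeneousComponent_totalDegree_ne_zero {R : Type*} [CommSemiring R]
    {p : MvPolynomial σ R} (hp : p ≠ 0) : homogeneousComponent p.totalDegree p ≠ 0 := by
  obtain ⟨d, hd, hdeg⟩ := Finset.exists_mem_eq_sup p.support (support_nonempty.mpr hp)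
    fun s => s.sum fun _ e => e
  have hdD : d.degree = p.totalDegree := hdeg.symm
  intro h
  have := coeff_homogeneousComponent p.totalDegree p d
  rw [h, coeff_zero, if_pos hdD] at this
  exact mem_support_iff.mp hd this.symm

theorem norm_eval_le_of_norm_coeff_le {K : Type*} [SeminormedCommRing K]
    {p : MvPolynomial σ K} {s : Finset (σ →₀ ℕ)} (hs : p.support ⊆ s) {δ : ℝ}
    (hδ : ∀ d, ‖p.coeff d‖ ≤ δ) (w : σ → K) :
    ‖eval w p‖ ≤ δ * ∑ d ∈ s, ‖eval w (monomial d 1)‖ := by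
  rw [Finset.mul_sum]
  calc ‖eval w p‖ = ‖∑ d ∈ s, p.coeff d * eval w (monomial d 1)‖ := by
        conv_lhs => rw [p.as_sum, map_sum]
        rw [Finset.sum_subset hs fun d _ hd => by simp [notMem_support_iff.mp hd]]
        simp [eval_monomial]
    _ ≤ ∑ d ∈ s, ‖p.coeff d‖ * ‖eval w (monomial d 1)‖ :=
        (norm_sum_le _ _).trans (Finset.sum_le_sum fun _ _ => norm_mul_le _ _)
    _ ≤ ∑ d ∈ s, δ * ‖eval w (monomial d 1)‖ :=
        Finset.sum_le_sum fun d _ => mul_le_mul_of_nonneg_right (hδ d) (norm_nonneg _)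

theorem norm_eval_homogeneousComponent_le_of_norm_coeff_le {K : Type*} [SeminormedCommRing K]
    (n : ℕ) {p : MvPolynomial σ K} {s : Finset (σ →₀ ℕ)} (hs : p.support ⊆ s) {δ : ℝ}
    (hδ : ∀ d, ‖p.coeff d‖ ≤ δ) (w : σ → K) :
    ‖eval w (homogeneousComponent n p)‖ ≤ δ * ∑ d ∈ s, ‖eval w (monomial d 1)‖ := by
  refine norm_eval_le_of_norm_coeff_le
    (((support_homogeneousComponent _ _).trans_subset (Finset.filter_subset _ _)).trans hs)
    (fun d => ?_) w
  rw [coeff_homogeneousComponent]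
  split_ifs
  exacts [hδ d, norm_zero.trans_le ((norm_nonneg _).trans (hδ d))]

variable {K : Type*} [NormedField K] [IsAlgClosed K]

theorem exists_eval_eq_zero_of_norm_eval_lt {Q : MvPolynomial σ K} {D : ℕ}
    (hD : Q.totalDegree ≤ D) {y v : σ → K} {c : ℝ} (hc : 0 ≤ c)
    (h : ‖eval y Q‖ < c ^ D * ‖eval v (homogeneousComponent D Q)‖) :
    ∃ t : K, ‖t‖ < c ∧ eval (y + t • v) Q = 0 := by
  set q := restrictToLine y v Q
  have hcoeff : q.coeff D = eval v (homogeneousComponent D Q) :=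
    coeff_restrictToLine_of_totalDegree_le y v hD
  have hne : q.coeff D ≠ 0 := by
    rw [hcoeff]
    intro h0
    rw [h0, norm_zero, mul_zero] at h
    exact (norm_nonneg _).not_gt h
  have hdeg : q.natDegree = D :=
    ((natDegree_restrictToLine_le y v Q).trans hD).antisymm (le_natDegree_of_ne_zero hne)
  obtain ⟨t, ht, htc⟩ := q.exists_isRoot_norm_lt_of_norm_eval_zero_lt hc <| by
    rwa [leadingCoeff, hdeg, hcoeff, eval_restrictToLine, zero_smul, add_zero]
  exact ⟨t, htc, by rwa [← eval_restrictToLine]⟩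

theorem exists_root_on_line_of_coeff_close {P : MvPolynomial σ K} {y v : σ → K}
    (hy : eval y P = 0) (hv : eval v (homogeneousComponent P.totalDegree P) ≠ 0) {c : ℝ}
    (hc : 0 < c) :
    ∃ δ > 0, ∀ Q : MvPolynomial σ K, Q.support ⊆ P.support →
      (∀ d, ‖Q.coeff d - P.coeff d‖ ≤ δ) → ∃ t : K, ‖t‖ < c ∧ eval (y + t • v) Q = 0 := by
  classical
  set D := P.totalDegree
  set S : (σ → K) → ℝ := fun w => ∑ d ∈ P.support, ‖eval w (monomial d 1)‖
  obtain ⟨δ, hδ, hsmall⟩ : ∃ δ > 0,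
      δ * S y < c ^ D * (‖eval v (homogeneousComponent D P)‖ - δ * S v) :=
    Filter.Eventually.exists_gt <| ContinuousAt.eventually_lt (by fun_prop) (by fun_prop) <| by
      simpa using mul_pos (pow_pos hc D) (norm_pos_iff.mpr hv)
  refine ⟨δ, hδ, fun Q hsupp hcoeff => ?_⟩
  have hsub : (Q - P).support ⊆ P.support :=
    (support_sub _ _ _).trans (Finset.union_subset hsupp subset_rfl)
  have hcoeff' : ∀ d, ‖(Q - P).coeff d‖ ≤ δ := by simpa using hcoeff
  have hQy : ‖eval y Q‖ ≤ δ * S y := by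
    simpa [hy] using norm_eval_le_of_norm_coeff_le hsub hcoeff' y
  have hQv : ‖eval v (homogeneousComponent D Q) - eval v (homogeneousComponent D P)‖ ≤ δ * S v := by
    simpa using norm_eval_homogeneousComponent_le_of_norm_coeff_le D hsub hcoeff' v
  refine exists_eval_eq_zero_of_norm_eval_lt (totalDegree_le_of_support_subset hsupp) hc.le ?_
  calc ‖eval y Q‖ ≤ δ * S y := hQy
    _ < c ^ D * (‖eval v (homogeneousComponent D P)‖ - δ * S v) := hsmall
    _ ≤ c ^ D * ‖eval v (homogeneousComponent D Q)‖ := by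
      gcongr
      linarith [norm_le_norm_add_norm_sub (eval v (homogeneousComponent D Q))
        (eval v (homogeneousComponent D P))]

end MvPolynomial

theorem eucNorm_eq_norm_toLp {n : ℕ} (v : Fin n → ℂ) : eucNorm v = ‖WithLp.toLp 2 v‖ :=
  (EuclideanSpace.norm_eq _).symm

theorem eucNorm_smul {n : ℕ} (t : ℂ) (v : Fin n → ℂ) : eucNorm (t • v) = ‖t‖ * eucNorm v := by
  rw [eucNorm_eq_norm_toLp, eucNorm_eq_norm_toLp, WithLp.toLp_smul, norm_smul]

theorem stmt6 (n : ℕ) (P : MvPolynomial (Fin n) ℂ) (hP : P ≠ 0)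
    (y : Fin n → ℂ) (hy : eval y P = 0) (ε : ℝ) (hε : 0 < ε) :
    ∃ δ : ℝ, 0 < δ ∧ ∀ Q : MvPolynomial (Fin n) ℂ,
      Q.support = P.support →
      (∀ d, ‖Q.coeff d - P.coeff d‖ ≤ δ) →
      ∃ z : Fin n → ℂ, eval z Q = 0 ∧ eucNorm (z - y) < ε := by
  obtain ⟨v, hv⟩ : ∃ v, eval v (homogeneousComponent P.totalDegree P) ≠ 0 := by
    by_contra! h
    exact homogeneousComponent_totalDegree_ne_zero hP
      (MvPolynomial.funext fun x => (h x).trans (map_zero _).symm)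
  have hN : 0 ≤ eucNorm v := Real.sqrt_nonneg _
  obtain ⟨δ, hδ, hroot⟩ :=
    exists_root_on_line_of_coeff_close hy hv (c := ε / (eucNorm v + 1)) (by positivity)
  refine ⟨δ, hδ, fun Q hsupp hcoeff => ?_⟩
  obtain ⟨t, ht, hzero⟩ := hroot Q hsupp.subset hcoeff
  refine ⟨y + t • v, hzero, ?_⟩
  rw [add_sub_cancel_left, eucNorm_smul]
  calc ‖t‖ * eucNorm v ≤ ε / (eucNorm v + 1) * eucNorm v := by gcongr
    _ < ε / (eucNorm v + 1) * (eucNorm v + 1) := by gcongr; linarith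
    _ = ε := div_mul_cancel₀ _ (by positivity)
end

section
/- Let B = {z ∈ ℂ : |z − 1| ≤ 2/3}. There exist unique continuous functions s_1, s_2 : B → ℂ satisfying, for all z ∈ B: z = s_1(z) + s_2(z), |s_1(z)| = |s_2(z)| = 1, and Im(s_1(z)/s_2(z)) > 0. -/
/-!
Write a summand as `a = z * u`. Then `‖a‖ = ‖z - a‖ = 1` says that `u` lies at distance `‖z‖⁻¹`
from both `0` and `1`, and `Im (a / (z - a)) = Im u / normSq (1 - u)` has the sign of `Im u`.
Since `‖z‖⁻¹ > 1 / 2` on the disc, these conditions pin `u` down as the apex, in the upper half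
plane, of the isosceles triangle with base `[0, 1]` and legs `‖z‖⁻¹`; this apex depends
continuously on `z`.
-/

open Complex

noncomputable def isoscelesApex (r : ℝ) : ℂ := 1 / 2 + (√(r ^ 2 - 1 / 4) : ℝ) * I

theorem continuous_isoscelesApex : Continuous isoscelesApex := by
  unfold isoscelesApex; fun_prop

theorem isoscelesApex_re (r : ℝ) : (isoscelesApex r).re = 1 / 2 := by
  simp [isoscelesApex]

theorem isoscelesApex_im (r : ℝ) : (isoscelesApex r).im = √(r ^ 2 - 1 / 4) := by
  simp [isoscelesApex]

theorem im_div_one_sub (u : ℂ) : (u / (1 - u)).im = u.im / normSq (1 - u) := by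
  simp only [div_im, sub_re, sub_im, one_re, one_im]
  ring

theorem eq_isoscelesApex_iff {r : ℝ} (hr : 1 / 2 < r) {u : ℂ} :
    u = isoscelesApex r ↔ ‖u‖ = r ∧ ‖1 - u‖ = r ∧ 0 < u.im := by
  have hnorm : ∀ v : ℂ, ‖v‖ = r ↔ v.re ^ 2 + v.im ^ 2 = r ^ 2 := fun v => by
    rw [← sq_eq_sq₀ (norm_nonneg v) (by linarith), Complex.sq_norm, normSq_apply]
    ring_nf
  have hdisc : 0 < r ^ 2 - 1 / 4 := by nlinarith
  simp only [hnorm, sub_re, sub_im, one_re, one_im]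
  constructor
  · rintro rfl
    have hsq := Real.sq_sqrt hdisc.le
    rw [isoscelesApex_re, isoscelesApex_im]
    exact ⟨by linarith, by linarith, Real.sqrt_pos.2 hdisc⟩
  · rintro ⟨h0, h1, him⟩
    have hre : u.re = 1 / 2 := by linarith
    have him_sq : u.im ^ 2 = r ^ 2 - 1 / 4 := by rw [hre] at h0; linarith
    apply Complex.ext
    · rw [hre, isoscelesApex_re]
    · rw [isoscelesApex_im, ← him_sq, Real.sqrt_sq him.le]

theorem eq_mul_isoscelesApex_iff {z a : ℂ} (hz : z ≠ 0) (hz2 : ‖z‖ < 2) :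
    a = z * isoscelesApex ‖z‖⁻¹ ↔ ‖a‖ = 1 ∧ ‖z - a‖ = 1 ∧ 0 < (a / (z - a)).im := by
  obtain ⟨u, rfl⟩ : ∃ u, a = z * u := ⟨a / z, by field_simp⟩
  have hz0 : ‖z‖ ≠ 0 := norm_ne_zero_iff.2 hz
  have hnorm : ∀ v : ℂ, ‖z * v‖ = 1 ↔ ‖v‖ = ‖z‖⁻¹ := fun v => by
    rw [norm_mul, mul_eq_one_iff_inv_eq₀ hz0, eq_comm]
  rw [← mul_one_sub, mul_div_mul_left _ _ hz, hnorm, hnorm, mul_right_inj' hz, im_div_one_sub,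
    eq_isoscelesApex_iff (by rw [lt_inv_comm₀ (by norm_num) (norm_pos_iff.2 hz)]; linarith)]
  refine and_congr_right fun _ => and_congr_right fun h1 => (div_pos_iff_of_pos_right ?_).symm
  rw [normSq_pos, ← norm_ne_zero_iff, h1]
  exact inv_ne_zero hz0

theorem norm_pos_and_lt_two_of_norm_sub_one_le {z : ℂ} (hz : ‖z - 1‖ ≤ 2 / 3) :
    0 < ‖z‖ ∧ ‖z‖ < 2 := by
  have h1 := norm_sub_norm_le (1 : ℂ) z
  have h2 := norm_le_norm_add_norm_sub' z 1
  rw [norm_sub_rev, norm_one] at h1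
  rw [norm_one] at h2
  constructor <;> linarith

theorem stmt7 :
    ∃! p : ({z : ℂ // ‖z - 1‖ ≤ 2 / 3} → ℂ) × ({z : ℂ // ‖z - 1‖ ≤ 2 / 3} → ℂ),
      Continuous p.1 ∧ Continuous p.2 ∧
      ∀ z : {z : ℂ // ‖z - 1‖ ≤ 2 / 3},
        (z : ℂ) = p.1 z + p.2 z ∧ ‖p.1 z‖ = 1 ∧ ‖p.2 z‖ = 1 ∧
        0 < (p.1 z / p.2 z).im := by
  have hB (z : {z : ℂ // ‖z - 1‖ ≤ 2 / 3}) := norm_pos_and_lt_two_of_norm_sub_one_le z.2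
  have hsplit (z : {z : ℂ // ‖z - 1‖ ≤ 2 / 3}) {a : ℂ} :=
    eq_mul_isoscelesApex_iff (a := a) (norm_pos_iff.1 (hB z).1) (hB z).2
  set s₁ := fun z : {z : ℂ // ‖z - 1‖ ≤ 2 / 3} => (z : ℂ) * isoscelesApex ‖(z : ℂ)‖⁻¹
  have hs₁ : Continuous s₁ := continuous_subtype_val.mul <| continuous_isoscelesApex.comp <|
    continuous_subtype_val.norm.inv₀ fun z => (hB z).1.ne'
  refine ⟨(s₁, fun z => z - s₁ z), ⟨hs₁, continuous_subtype_val.sub hs₁, fun z => ?_⟩, ?_⟩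
  · exact ⟨(add_sub_cancel _ _).symm, (hsplit z).1 rfl⟩
  · rintro ⟨q₁, q₂⟩ ⟨-, -, hq⟩
    have hq₂ (z : {z : ℂ // ‖z - 1‖ ≤ 2 / 3}) : q₂ z = z - q₁ z := by
      rw [(hq z).1, add_sub_cancel_left]
    have hq₁ : q₁ = s₁ := funext fun z => (hsplit z).2 <| by simpa only [← hq₂] using (hq z).2
    subst hq₁
    exact Prod.ext rfl (funext hq₂)
end

section
/- Let Δ be an n×n complex matrix with Frobenius norm ‖Δ‖ < 1/(3√n), let T = {(z_1,…,z_n) ∈ ℂ^n : |z_j| = 1 for all j}, and let A = {z ∈ ℂ : |z−1| ≤ 1/3}. Then A^n ⊆ {t_1 + (I + Δ)t_2 : t_1, t_2 ∈ T}. -/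
/-!
Every `ζ` with `‖ζ‖ ≤ 2` is a sum of two unit complex numbers, and on the annulus
`1/3 ≤ ‖ζ‖ ≤ 5/3` one of them, `rhombusVertex ζ`, can be chosen `4`-Lipschitz. Putting
`t₂ = rhombusVertex ∘ z`, it suffices to solve `z = w - Δ t₂(z)` on the polydisc
`‖z_j - 1‖ ≤ 2/3`. The map preserves the polydisc since `‖Δ t₂‖ ≤ ‖Δ‖ √n < 1/3`, and for
`n ≥ 2` it contracts since `4 ‖Δ‖ < 4 / (3 √2) < 1`, so Banach's fixed point theorem applies.
For `n = 1` the contraction estimate fails, and `|w - (1 + Δ) t| = 1` is solved on the unit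
circle by the intermediate value theorem instead.
-/

/-- Frobenius norm on `n × n` complex matrices. -/
noncomputable def fnorm {n : ℕ} (A : Matrix (Fin n) (Fin n) ℂ) : ℝ :=
  Real.sqrt (∑ i, ∑ j, ‖A i j‖ ^ 2)

open Complex ComplexConjugate Set
open scoped Matrix

/-- The apex of the isosceles triangle over `[0, p]` with unit legs. -/
noncomputable def apex (p : ℝ) : ℂ := ⟨p / 2, √(4 - p ^ 2) / 2⟩

lemma norm_apex {p : ℝ} (hp : |p| ≤ 2) : ‖apex p‖ = 1 := by
  have h4 : 0 ≤ 4 - p ^ 2 := by nlinarith [sq_abs p, abs_nonneg p]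
  rw [norm_def, Real.sqrt_eq_one]
  simp only [normSq_apply, apex]
  nlinarith [Real.sq_sqrt h4]

lemma apex_add_conj (p : ℝ) : apex p + conj (apex p) = p := by
  apply Complex.ext <;> simp [apex]

lemma norm_apex_sub_apex_le {p q : ℝ} (hp : p ∈ Icc (1 / 3) (5 / 3))
    (hq : q ∈ Icc (1 / 3) (5 / 3)) : ‖apex p - apex q‖ ≤ |p - q| := by
  obtain ⟨hp₁, hp₂⟩ := hp
  obtain ⟨hq₁, hq₂⟩ := hq
  rw [← Real.sqrt_sq_eq_abs, norm_def]
  apply Real.sqrt_le_sqrt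
  simp only [normSq_apply, apex, sub_re, sub_im]
  have hs : √(4 - p ^ 2) ^ 2 = 4 - p ^ 2 := Real.sq_sqrt (by nlinarith)
  have ht : √(4 - q ^ 2) ^ 2 = 4 - q ^ 2 := Real.sq_sqrt (by nlinarith)
  have hs₁ : 1 ≤ √(4 - p ^ 2) := Real.le_sqrt_of_sq_le (by nlinarith)
  have ht₁ : 1 ≤ √(4 - q ^ 2) := Real.le_sqrt_of_sq_le (by nlinarith)
  generalize √(4 - p ^ 2) = s at *
  generalize √(4 - q ^ 2) = t at *
  have key : (s - t) ^ 2 * (s + t) ^ 2 = (p - q) ^ 2 * (p + q) ^ 2 := by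
    linear_combination (s ^ 2 - t ^ 2 + q ^ 2 - p ^ 2) * (hs - ht)
  have hst₂ : 4 ≤ (s + t) ^ 2 := by nlinarith
  have hpq₂ : (p + q) ^ 2 ≤ 100 / 9 := by nlinarith
  have hst : (s - t) ^ 2 * 4 ≤ (p - q) ^ 2 * (100 / 9) := by
    calc (s - t) ^ 2 * 4 ≤ (s - t) ^ 2 * (s + t) ^ 2 := by gcongr
      _ = (p - q) ^ 2 * (p + q) ^ 2 := key
      _ ≤ (p - q) ^ 2 * (100 / 9) := by gcongr
  nlinarith [hst]

/-- For `0 < ‖ζ‖ ≤ 2`, the points `0`, `rhombusVertex ζ`, `ζ`, `ζ - rhombusVertex ζ` form a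
rhombus with unit sides; this is the continuous choice `t₂` of the paper. -/
noncomputable def rhombusVertex (ζ : ℂ) : ℂ := ζ / ‖ζ‖ * apex ‖ζ‖

lemma sub_rhombusVertex {ζ : ℂ} (hζ : ζ ≠ 0) :
    ζ - rhombusVertex ζ = ζ / ‖ζ‖ * conj (apex ‖ζ‖) := by
  have hζ' : (‖ζ‖ : ℂ) ≠ 0 := by simpa using hζ
  have := apex_add_conj ‖ζ‖
  rw [rhombusVertex]
  field_simp
  linear_combination -this

lemma norm_rhombusVertex {ζ : ℂ} (h : ‖ζ‖ ∈ Ioc 0 2) : ‖rhombusVertex ζ‖ = 1 := by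
  rw [rhombusVertex, norm_mul, norm_div, norm_real, norm_norm, div_self h.1.ne',
    norm_apex (by rw [abs_norm]; exact h.2), one_mul]

lemma norm_sub_rhombusVertex {ζ : ℂ} (h : ‖ζ‖ ∈ Ioc 0 2) : ‖ζ - rhombusVertex ζ‖ = 1 := by
  rw [sub_rhombusVertex (norm_pos_iff.mp h.1), norm_mul, norm_div, norm_real, norm_norm,
    div_self h.1.ne', RCLike.norm_conj, norm_apex (by rw [abs_norm]; exact h.2), one_mul]

lemma norm_inv_smul_sub_inv_smul_sq_mul_le {E : Type*} [NormedAddCommGroup E]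
    [InnerProductSpace ℝ E] {a b : E} (ha : a ≠ 0) (hb : b ≠ 0) :
    ‖‖a‖⁻¹ • a - ‖b‖⁻¹ • b‖ ^ 2 * (‖a‖ * ‖b‖) ≤ ‖a - b‖ ^ 2 := by
  have ha' : ‖a‖ ≠ 0 := norm_ne_zero_iff.mpr ha
  have hb' : ‖b‖ ≠ 0 := norm_ne_zero_iff.mpr hb
  rw [norm_sub_sq_real, norm_sub_sq_real, real_inner_smul_left, real_inner_smul_right,
    norm_smul, norm_smul, norm_inv, norm_inv, norm_norm, norm_norm, inv_mul_cancel₀ ha',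
    inv_mul_cancel₀ hb']
  field_simp
  nlinarith [sq_nonneg (‖a‖ - ‖b‖)]

lemma norm_rhombusVertex_sub_le {a b : ℂ} (ha : ‖a‖ ∈ Icc (1 / 3) (5 / 3))
    (hb : ‖b‖ ∈ Icc (1 / 3) (5 / 3)) : ‖rhombusVertex a - rhombusVertex b‖ ≤ 4 * ‖a - b‖ := by
  have ha₀ : a ≠ 0 := by rintro rfl; norm_num at ha
  have hb₀ : b ≠ 0 := by rintro rfl; norm_num at hb
  have hsplit : rhombusVertex a - rhombusVertex b =
      apex ‖a‖ * (a / ‖a‖ - b / ‖b‖) + b / ‖b‖ * (apex ‖a‖ - apex ‖b‖) := by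
    rw [rhombusVertex, rhombusVertex]; ring
  have hdir : ‖a / ‖a‖ - b / ‖b‖‖ ≤ 3 * ‖a - b‖ := by
    have h := norm_inv_smul_sub_inv_smul_sq_mul_le ha₀ hb₀
    simp only [real_smul, ofReal_inv, ← div_eq_inv_mul] at h
    have hab : 1 / 9 ≤ ‖a‖ * ‖b‖ := by nlinarith [ha.1, hb.1]
    refine (pow_le_pow_iff_left₀ (norm_nonneg _) (by positivity) two_ne_zero).mp ?_
    nlinarith [sq_nonneg ‖a / ‖a‖ - b / ‖b‖‖]
  calc ‖rhombusVertex a - rhombusVertex b‖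
      ≤ ‖a / ‖a‖ - b / ‖b‖‖ + ‖apex ‖a‖ - apex ‖b‖‖ := by
        rw [hsplit]
        refine (norm_add_le _ _).trans_eq ?_
        rw [norm_mul, norm_mul, norm_apex (by rw [abs_norm]; linarith [ha.2]), norm_div,
          norm_real, norm_norm, div_self (norm_ne_zero_iff.mpr hb₀), one_mul, one_mul]
    _ ≤ 3 * ‖a - b‖ + ‖a - b‖ :=
        add_le_add hdir ((norm_apex_sub_apex_le ha hb).trans (abs_norm_sub_norm_le a b))
    _ = 4 * ‖a - b‖ := by ring

lemma exists_norm_eq_one_norm_sub_mul_eq_one {a b : ℂ} (h₁ : |‖a‖ - ‖b‖| ≤ 1)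
    (h₂ : 1 ≤ ‖a‖ + ‖b‖) : ∃ t : ℂ, ‖t‖ = 1 ∧ ‖a - b * t‖ = 1 := by
  set u := exp (arg a * I)
  have ha : (‖a‖ : ℂ) * u = a := norm_mul_exp_arg_mul_I a
  have hu : ‖u‖ = 1 := norm_exp_ofReal_mul_I _
  -- along this half circle `b * t` turns from the direction of `a` to the opposite one
  have hb : ∀ s : ℝ, b * exp ((arg a - arg b + s : ℝ) * I) = ‖b‖ * u * exp (s * I) := by
    intro s
    nth_rewrite 1 [← norm_mul_exp_arg_mul_I b]
    rw [mul_assoc, mul_assoc, ← exp_add, ← exp_add]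
    push_cast
    ring_nf
  have hF₀ : a - b * exp ((arg a - arg b + 0 : ℝ) * I) = ((‖a‖ - ‖b‖ : ℝ) : ℂ) * u := by
    rw [hb, ofReal_zero, zero_mul, exp_zero]
    push_cast
    linear_combination -ha
  have hFπ : a - b * exp ((arg a - arg b + Real.pi : ℝ) * I) = ((‖a‖ + ‖b‖ : ℝ) : ℂ) * u := by
    rw [hb, exp_pi_mul_I]
    push_cast
    linear_combination -ha
  have hcont : Continuous fun s : ℝ => ‖a - b * exp ((arg a - arg b + s : ℝ) * I)‖ := by
    fun_prop
  obtain ⟨s, -, hs⟩ : (1 : ℝ) ∈ (fun s : ℝ => ‖a - b * exp ((arg a - arg b + s : ℝ) * I)‖) ''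
      Icc 0 Real.pi := by
    refine intermediate_value_Icc Real.pi_pos.le hcont.continuousOn ⟨?_, ?_⟩
    · rwa [hF₀, norm_mul, hu, mul_one, norm_real, Real.norm_eq_abs]
    · rwa [hFπ, norm_mul, hu, mul_one, norm_real, Real.norm_of_nonneg (by positivity)]
  exact ⟨_, norm_exp_ofReal_mul_I _, hs⟩

lemma norm_mem_Icc_of_norm_sub_le {E : Type*} [SeminormedAddCommGroup E] {a b : E} {r : ℝ}
    (h : ‖a - b‖ ≤ r) : ‖a‖ ∈ Icc (‖b‖ - r) (‖b‖ + r) := by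
  have := abs_le.mp ((abs_norm_sub_norm_le a b).trans h)
  constructor <;> linarith [this.1, this.2]

section Frobenius

open scoped Matrix.Norms.Frobenius

lemma Matrix.frobenius_norm_toLp_mulVec_le {m n α : Type*} [Fintype m] [Fintype n] [RCLike α]
    (A : Matrix m n α) (v : n → α) : ‖WithLp.toLp 2 (A *ᵥ v)‖ ≤ ‖A‖ * ‖WithLp.toLp 2 v‖ := by
  simpa only [← Matrix.frobenius_norm_replicateCol (ι := Unit), Matrix.replicateCol_mulVec]
    using Matrix.frobenius_norm_mul A (Matrix.replicateCol Unit v)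

lemma fnorm_eq_frobenius_norm {n : ℕ} (A : Matrix (Fin n) (Fin n) ℂ) : fnorm A = ‖A‖ := by
  simp only [fnorm, Matrix.frobenius_norm_def, Real.sqrt_eq_rpow, Real.rpow_two]

end Frobenius

lemma fnorm_nonneg {n : ℕ} (A : Matrix (Fin n) (Fin n) ℂ) : 0 ≤ fnorm A :=
  Real.sqrt_nonneg _

lemma fnorm_fin_one (A : Matrix (Fin 1) (Fin 1) ℂ) : fnorm A = ‖A 0 0‖ := by
  simp [fnorm]

lemma norm_toLp_mulVec_le_fnorm_mul {n : ℕ} (A : Matrix (Fin n) (Fin n) ℂ) (v : Fin n → ℂ) :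
    ‖WithLp.toLp 2 (A *ᵥ v)‖ ≤ fnorm A * ‖WithLp.toLp 2 v‖ :=
  fnorm_eq_frobenius_norm A ▸ Matrix.frobenius_norm_toLp_mulVec_le A v

lemma EuclideanSpace.norm_le_mul_norm_of_forall {ι 𝕜 : Type*} [Fintype ι] [RCLike 𝕜]
    {x y : EuclideanSpace 𝕜 ι} {L : ℝ} (hL : 0 ≤ L) (h : ∀ i, ‖x i‖ ≤ L * ‖y i‖) :
    ‖x‖ ≤ L * ‖y‖ := by
  rw [EuclideanSpace.norm_eq, EuclideanSpace.norm_eq, ← Real.sqrt_sq hL,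
    ← Real.sqrt_mul (sq_nonneg L), Finset.mul_sum]
  gcongr with i
  rw [← mul_pow]
  exact pow_le_pow_left₀ (norm_nonneg _) (h i) 2

lemma LipschitzOnWith.exists_isFixedPt_of_mapsTo {α : Type*} [MetricSpace α] [CompleteSpace α]
    {s : Set α} {f : α → α} {K : NNReal} (hf : LipschitzOnWith K f s) (hK : K < 1)
    (hs : IsClosed s) (hne : s.Nonempty) (hsf : MapsTo f s s) :
    ∃ x ∈ s, Function.IsFixedPt f x := by
  obtain ⟨x, hx⟩ := hne
  obtain ⟨y, hy, hfy, -⟩ := ContractingWith.exists_fixedPoint' hs.isComplete hsf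
    ⟨hK, hf.mapsToRestrict hsf⟩ hx (edist_ne_top x (f x))
  exact ⟨y, hy, hfy⟩

def polydisc (ι : Type*) (c : ℂ) (r : ℝ) : Set (EuclideanSpace ℂ ι) := {z | ∀ j, ‖z j - c‖ ≤ r}

lemma isClosed_polydisc (ι : Type*) (c : ℂ) (r : ℝ) : IsClosed (polydisc ι c r) := by
  simp only [polydisc, ofPred_forall]
  exact isClosed_iInter fun j => isClosed_le (by fun_prop) continuous_const

lemma norm_mem_Icc_of_mem_polydisc {ι : Type*} {z : EuclideanSpace ℂ ι}
    (hz : z ∈ polydisc ι 1 (2 / 3)) (j : ι) : ‖z j‖ ∈ Icc (1 / 3) (5 / 3) := by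
  have := norm_mem_Icc_of_norm_sub_le (hz j)
  norm_num at this
  exact this

noncomputable def rhombusMap {n : ℕ} (Δ : Matrix (Fin n) (Fin n) ℂ) (w : Fin n → ℂ)
    (z : EuclideanSpace ℂ (Fin n)) : EuclideanSpace ℂ (Fin n) :=
  WithLp.toLp 2 (w - Δ *ᵥ fun k => rhombusVertex (z k))

section rhombusMap

variable {n : ℕ} (Δ : Matrix (Fin n) (Fin n) ℂ) (w : Fin n → ℂ)

lemma mapsTo_rhombusMap (hn : fnorm Δ * √n ≤ 1 / 3) (hw : ∀ j, ‖w j - 1‖ ≤ 1 / 3) :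
    MapsTo (rhombusMap Δ w) (polydisc (Fin n) 1 (2 / 3)) (polydisc (Fin n) 1 (2 / 3)) := by
  intro z hz j
  set t := WithLp.toLp 2 (Δ *ᵥ fun k => rhombusVertex (z k))
  have hunit : ‖WithLp.toLp 2 (fun k => rhombusVertex (z k))‖ = √n := by
    have h1 : ∀ k, ‖rhombusVertex (z k)‖ = 1 := fun k =>
      norm_rhombusVertex (Icc_subset_Ioc (by norm_num) (by norm_num)
        (norm_mem_Icc_of_mem_polydisc hz k))
    simp [EuclideanSpace.norm_eq, h1]
  calc ‖rhombusMap Δ w z j - 1‖ = ‖(w j - 1) - t j‖ := by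
        simp only [rhombusMap, t, Pi.sub_apply]; ring_nf
    _ ≤ ‖w j - 1‖ + ‖t‖ := (norm_sub_le _ _).trans (by gcongr; exact PiLp.norm_apply_le t j)
    _ ≤ 1 / 3 + fnorm Δ * √n := by
        gcongr
        · exact hw j
        · exact (norm_toLp_mulVec_le_fnorm_mul _ _).trans_eq (by rw [hunit])
    _ ≤ 2 / 3 := by linarith

lemma lipschitzOnWith_rhombusMap :
    LipschitzOnWith ⟨4 * fnorm Δ, by linarith [fnorm_nonneg Δ]⟩ (rhombusMap Δ w)
      (polydisc (Fin n) 1 (2 / 3)) := by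
  refine LipschitzOnWith.of_dist_le_mul fun z hz z' hz' => ?_
  have hdiff : rhombusMap Δ w z - rhombusMap Δ w z' =
      WithLp.toLp 2 (Δ *ᵥ fun k => rhombusVertex (z' k) - rhombusVertex (z k)) := by
    ext j
    simp [rhombusMap, Matrix.mulVec, dotProduct, mul_sub]
  rw [dist_eq_norm, dist_eq_norm, hdiff, ← norm_neg (z - z'), neg_sub]
  change _ ≤ 4 * fnorm Δ * _
  rw [mul_comm 4, mul_assoc]
  refine (norm_toLp_mulVec_le_fnorm_mul _ _).trans (mul_le_mul_of_nonneg_left ?_ (fnorm_nonneg Δ))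
  exact EuclideanSpace.norm_le_mul_norm_of_forall (by norm_num) fun k =>
    norm_rhombusVertex_sub_le (norm_mem_Icc_of_mem_polydisc hz' k)
      (norm_mem_Icc_of_mem_polydisc hz k)

lemma exists_add_mulVec_rhombusVertex_eq (h4 : 4 * fnorm Δ < 1) (hn : fnorm Δ * √n ≤ 1 / 3)
    (hw : ∀ j, ‖w j - 1‖ ≤ 1 / 3) :
    ∃ z : Fin n → ℂ, (∀ j, ‖z j‖ ∈ Icc (1 / 3) (5 / 3)) ∧
      z + Δ *ᵥ (fun k => rhombusVertex (z k)) = w := by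
  obtain ⟨z, hz, hfix⟩ := (lipschitzOnWith_rhombusMap Δ w).exists_isFixedPt_of_mapsTo
    (show (⟨4 * fnorm Δ, _⟩ : NNReal) < 1 from h4) (isClosed_polydisc _ _ _)
    ⟨WithLp.toLp 2 1, fun j => by norm_num⟩ (mapsTo_rhombusMap Δ w hn hw)
  exact ⟨z, norm_mem_Icc_of_mem_polydisc hz, eq_sub_iff_add_eq.mp (congrArg WithLp.ofLp hfix).symm⟩

end rhombusMap

lemma exists_eq_add_mulVec_of_fin_one (M : Matrix (Fin 1) (Fin 1) ℂ) (w : Fin 1 → ℂ)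
    (h₁ : |‖w 0‖ - ‖M 0 0‖| ≤ 1) (h₂ : 1 ≤ ‖w 0‖ + ‖M 0 0‖) :
    ∃ t₁ t₂ : Fin 1 → ℂ, (∀ j, ‖t₁ j‖ = 1) ∧ (∀ j, ‖t₂ j‖ = 1) ∧ w = t₁ + M *ᵥ t₂ := by
  obtain ⟨t, ht, hwt⟩ := exists_norm_eq_one_norm_sub_mul_eq_one h₁ h₂
  refine ⟨fun _ => w 0 - M 0 0 * t, fun _ => t, fun _ => hwt, fun _ => ht, ?_⟩
  ext j
  rw [Subsingleton.elim j 0]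
  simp [Matrix.mulVec, dotProduct]

lemma four_mul_lt_one_of_lt_one_div_three_mul_sqrt {x : ℝ} {n : ℕ} (hn : n ≠ 1)
    (hx : x < 1 / (3 * √n)) : 4 * x < 1 := by
  obtain rfl | hn₂ : n = 0 ∨ 2 ≤ n := by omega
  · simp only [CharP.cast_eq_zero, Real.sqrt_zero, mul_zero, div_zero] at hx
    linarith
  · have h4 : 4 ≤ 3 * √n := by
      have : (2 : ℝ) ≤ n := by exact_mod_cast hn₂
      have : (4 / 3 : ℝ) ≤ √n := Real.le_sqrt_of_sq_le (by linarith)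
      linarith
    have := hx.trans_le (one_div_le_one_div_of_le (by norm_num) h4)
    linarith

lemma mul_sqrt_le_of_lt_one_div_three_mul_sqrt {x : ℝ} {n : ℕ} (hx : x < 1 / (3 * √n)) :
    x * √n ≤ 1 / 3 := by
  obtain rfl | hn := eq_or_ne n 0
  · simp
  · have hsqrt : 0 < √n := Real.sqrt_pos.mpr (by positivity)
    rw [lt_div_iff₀ (by positivity)] at hx
    linarith

theorem stmt8 (n : ℕ) (Δ : Matrix (Fin n) (Fin n) ℂ)
    (hΔ : fnorm Δ < 1 / (3 * Real.sqrt n))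
    (w : Fin n → ℂ) (hw : ∀ j, ‖w j - 1‖ ≤ 1 / 3) :
    ∃ t₁ t₂ : Fin n → ℂ, (∀ j, ‖t₁ j‖ = 1) ∧ (∀ j, ‖t₂ j‖ = 1) ∧
      w = t₁ + Matrix.mulVec (1 + Δ) t₂ := by
  have hΔn := mul_sqrt_le_of_lt_one_div_three_mul_sqrt hΔ
  obtain rfl | hn := eq_or_ne n 1
  · have hM := norm_mem_Icc_of_norm_sub_le (a := (1 + Δ) 0 0) (b := 1) (r := 1 / 3)
      (by simpa [fnorm_fin_one] using hΔn)
    have hw₀ := norm_mem_Icc_of_norm_sub_le (hw 0)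
    rw [norm_one, mem_Icc] at hM hw₀
    exact exists_eq_add_mulVec_of_fin_one _ w (abs_le.mpr ⟨by linarith, by linarith⟩)
      (by linarith)
  · obtain ⟨z, hz, hzw⟩ := exists_add_mulVec_rhombusVertex_eq Δ w
      (four_mul_lt_one_of_lt_one_div_three_mul_sqrt hn hΔ) hΔn hw
    have hz' : ∀ j, ‖z j‖ ∈ Ioc 0 2 := fun j => Icc_subset_Ioc (by norm_num) (by norm_num) (hz j)
    refine ⟨z - fun k => rhombusVertex (z k), fun k => rhombusVertex (z k),
      fun j => norm_sub_rhombusVertex (hz' j), fun j => norm_rhombusVertex (hz' j), ?_⟩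
    rw [← hzw, Matrix.add_mulVec, Matrix.one_mulVec]
    abel
end

section
/- Let T = {(z_1,…,z_n) ∈ ℂ^n : all |z_j| = 1} and D = {(z_1,…,z_n) ∈ ℂ^n : all |z_j| ≤ 1}, and fix a compact set K ⊆ GL_n(ℂ). Then there is m_0 > 0 such that for every m ≥ m_0 and every (g_1, …, g_m) ∈ K^m, there exist continuous functions f_1, …, f_m : D → T such that ∑_{i=1}^m g_i f_i(z) = z for all z ∈ D. -/
/-!
On the polydisc `‖x‖ ≤ 1/2` of `ℂⁿ` (sup norm) write `x = P x + Q x + 1` with `P x`, `Q x` on the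
torus, coordinatewise through the two common points of the unit circles about `0` and about
`xⱼ - 1`; `Q` is Lipschitz. Let `g₁, g₂, g₃` be close to each other and `g₁ B = 1`. Then
`g₁ (P x) + g₂ (Q x) + g₃ 1 = w` as soon as `x = B (w - (g₂ - g₁) (Q x) - (g₃ - g₁) 1)`, so `Q x` is
a fixed point of `v ↦ Q (B (w - (g₂ - g₁) v - (g₃ - g₁) 1))`, a contraction for small `w`; its fixed
point depends continuously on `w`.

Cover the compact set `K` by finitely many small balls. The indices whose matrix lies in one ball
split into such triples and at most two left-over indices, which get the constant value `1`.
The left-over indices contribute a vector bounded independently of `m`, while the number of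
triples, and with it the radius of the ball of solvable targets, grows linearly in `m`.
-/

open Metric Set Filter Complex Matrix
open scoped NNReal

attribute [local instance] Matrix.linftyOpNormedAddCommGroup

theorem exists_continuousOn_fixedPoint {α β : Type*} [MetricSpace α] [TopologicalSpace β]
    {K : ℝ≥0} (hK : K < 1) {s : Set α} (hs : IsComplete s) (hne : s.Nonempty) {S : Set β}
    {F : β → α → α} (hmaps : ∀ b ∈ S, MapsTo (F b) s s)
    (hlip : ∀ b ∈ S, LipschitzOnWith K (F b) s)
    (hcont : ∀ x ∈ s, ContinuousOn (F · x) S) :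
    ∃ φ : β → α, ContinuousOn φ S ∧ ∀ b ∈ S, φ b ∈ s ∧ F b (φ b) = φ b := by
  have hfix : ∀ b, ∃ y, b ∈ S → y ∈ s ∧ F b y = y := by
    intro b
    by_cases hb : b ∈ S
    · obtain ⟨x, hx⟩ := hne
      obtain ⟨y, hys, hy, -⟩ := ContractingWith.exists_fixedPoint' hs (hmaps b hb)
        ⟨hK, (hlip b hb).mapsToRestrict (hmaps b hb)⟩ hx (edist_ne_top _ _)
      exact ⟨y, fun _ => ⟨hys, hy⟩⟩
    · exact ⟨hne.some, fun h => absurd h hb⟩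
  choose φ hφ using hfix
  refine ⟨φ, fun b₀ hb₀ => ?_, hφ⟩
  obtain ⟨hs₀, hfix₀⟩ := hφ b₀ hb₀
  have hdist : ∀ b ∈ S, dist (φ b) (φ b₀) ≤ dist (F b (φ b₀)) (F b₀ (φ b₀)) / (1 - K) := by
    intro b hb
    obtain ⟨hs, hfix⟩ := hφ b hb
    rw [le_div_iff₀ (sub_pos.mpr (by exact_mod_cast hK))]
    have hlip_b := (hlip b hb).dist_le_mul _ hs _ hs₀
    rw [hfix] at hlip_b
    calc dist (φ b) (φ b₀) * (1 - K)
        = dist (φ b) (φ b₀) - K * dist (φ b) (φ b₀) := by ring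
      _ ≤ dist (F b (φ b₀)) (φ b₀) := by
        linarith [dist_triangle (φ b) (F b (φ b₀)) (φ b₀)]
      _ = dist (F b (φ b₀)) (F b₀ (φ b₀)) := by rw [hfix₀]
  rw [ContinuousWithinAt, tendsto_iff_dist_tendsto_zero]
  refine squeeze_zero' (Eventually.of_forall fun _ => dist_nonneg)
    (eventually_nhdsWithin_of_forall hdist) ?_
  have := ((hcont _ hs₀ b₀ hb₀).tendsto.dist
    (tendsto_const_nhds (x := F b₀ (φ b₀)))).div_const (1 - (K : ℝ))
  rwa [dist_self, zero_div] at this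

/-- For `0 < ‖y‖ ≤ 2`, a common point of the unit circles about `0` and about `y`; the other one
is `y - unitCircleMeet y`. -/
noncomputable def unitCircleMeet (y : ℂ) : ℂ := y * (1 / 2 + (√(1 - ‖y‖ ^ 2 / 4) / ‖y‖ : ℝ) * I)

lemma norm_mul_half_add_mul_I {y : ℂ} (hy : y ≠ 0) (hy2 : ‖y‖ ≤ 2) {t : ℝ}
    (ht : t ^ 2 = (√(1 - ‖y‖ ^ 2 / 4) / ‖y‖) ^ 2) : ‖y * (1 / 2 + t * I)‖ = 1 := by
  have hnorm : ‖(1 / 2 + t * I : ℂ)‖ ^ 2 = 1 / 4 + t ^ 2 := by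
    rw [Complex.sq_norm, show (1 / 2 + t * I : ℂ) = ((1 / 2 : ℝ) : ℂ) + t * I by push_cast; ring,
      Complex.normSq_add_mul_I]
    ring
  have hy0 : ‖y‖ ≠ 0 := norm_ne_zero_iff.mpr hy
  rw [norm_mul, ← pow_left_inj₀ (by positivity) zero_le_one two_ne_zero, mul_pow, hnorm, ht,
    div_pow, Real.sq_sqrt (by nlinarith [norm_nonneg y])]
  field_simp
  ring

lemma norm_unitCircleMeet {y : ℂ} (hy : y ≠ 0) (hy2 : ‖y‖ ≤ 2) : ‖unitCircleMeet y‖ = 1 :=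
  norm_mul_half_add_mul_I hy hy2 rfl

lemma norm_sub_unitCircleMeet {y : ℂ} (hy : y ≠ 0) (hy2 : ‖y‖ ≤ 2) :
    ‖y - unitCircleMeet y‖ = 1 := by
  rw [← norm_mul_half_add_mul_I hy hy2 (neg_sq _), unitCircleMeet]
  push_cast
  ring_nf

lemma contDiffAt_unitCircleMeet {y : ℂ} (hy : y ≠ 0) (hy2 : ‖y‖ < 2) :
    ContDiffAt ℝ 1 unitCircleMeet y := by
  have hnorm : ContDiffAt ℝ 1 (fun y : ℂ => ‖y‖) y := contDiffAt_norm ℝ hy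
  have hcoeff : ContDiffAt ℝ 1 (fun y : ℂ => √(1 - ‖y‖ ^ 2 / 4) / ‖y‖) y :=
    (ContDiffAt.sqrt (by fun_prop) (by nlinarith [norm_nonneg y])).div hnorm
      (norm_ne_zero_iff.mpr hy)
  exact contDiffAt_id.mul (contDiffAt_const.add
    ((ofRealCLM.contDiff.contDiffAt.comp y hcoeff).mul contDiffAt_const))

lemma sub_one_ne_zero_and_norm_sub_one_lt_two {z : ℂ} (hz : ‖z‖ ≤ 1 / 2) :
    z - 1 ≠ 0 ∧ ‖z - 1‖ < 2 := by
  refine ⟨fun h => ?_, (norm_sub_le z 1).trans_lt (by simp; linarith)⟩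
  rw [sub_eq_zero.mp h, norm_one] at hz
  norm_num at hz

section Torus

variable {n : Type*} [Fintype n]

lemma norm_le_one_of_forall_norm_apply_eq_one {x : n → ℂ} (hx : ∀ j, ‖x j‖ = 1) : ‖x‖ ≤ 1 :=
  (pi_norm_le_iff_of_nonneg zero_le_one).mpr fun j => (hx j).le

lemma pi_norm_one_le : ‖(1 : n → ℂ)‖ ≤ 1 :=
  norm_le_one_of_forall_norm_apply_eq_one fun _ => norm_one

noncomputable def torusSplit (x : n → ℂ) : n → ℂ := fun j => unitCircleMeet (x j - 1)

lemma norm_torusSplit_apply {x : n → ℂ} (hx : ‖x‖ ≤ 1 / 2) (j : n) : ‖torusSplit x j‖ = 1 :=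
  have h := sub_one_ne_zero_and_norm_sub_one_lt_two ((norm_le_pi_norm x j).trans hx)
  norm_unitCircleMeet h.1 h.2.le

lemma norm_sub_torusSplit_apply {x : n → ℂ} (hx : ‖x‖ ≤ 1 / 2) (j : n) :
    ‖(x - 1 - torusSplit x) j‖ = 1 :=
  have h := sub_one_ne_zero_and_norm_sub_one_lt_two ((norm_le_pi_norm x j).trans hx)
  norm_sub_unitCircleMeet h.1 h.2.le

lemma exists_lipschitzOnWith_torusSplit :
    ∃ L, LipschitzOnWith L (torusSplit : (n → ℂ) → n → ℂ) (closedBall 0 (1 / 2)) := by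
  refine ContDiffOn.exists_lipschitzOnWith (n := 1) ?_ one_ne_zero (convex_closedBall _ _)
    (isCompact_closedBall _ _)
  refine contDiffOn_pi.mpr fun j x hx => ?_
  have h := sub_one_ne_zero_and_norm_sub_one_lt_two
    ((norm_le_pi_norm x j).trans (mem_closedBall_zero_iff.mp hx))
  exact ((contDiffAt_unitCircleMeet h.1 h.2).comp x
    ((contDiff_apply ℝ ℂ j).sub contDiff_const).contDiffAt).contDiffWithinAt

lemma norm_mulVec_sub_sub_le {B E₂ E₃ : Matrix n n ℂ} {w v : n → ℂ} {r ε : ℝ}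
    (h₂ : ‖E₂‖ ≤ ε) (h₃ : ‖E₃‖ ≤ ε) (hw : ‖w‖ ≤ r) (hv : ‖v‖ ≤ 1) :
    ‖B *ᵥ (w - E₂ *ᵥ v - E₃ *ᵥ 1)‖ ≤ ‖B‖ * (r + 2 * ε) := by
  have hE₂ : ‖E₂ *ᵥ v‖ ≤ ε := (linfty_opNorm_mulVec _ _).trans
    (by nlinarith [norm_nonneg E₂, norm_nonneg v])
  have hE₃ : ‖E₃ *ᵥ 1‖ ≤ ε := (linfty_opNorm_mulVec _ _).trans
    (by nlinarith [norm_nonneg E₃, pi_norm_one_le (n := n), norm_nonneg (1 : n → ℂ)])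
  refine (linfty_opNorm_mulVec _ _).trans (mul_le_mul_of_nonneg_left ?_ (norm_nonneg B))
  linarith [norm_sub_le (w - E₂ *ᵥ v) (E₃ *ᵥ 1), norm_sub_le w (E₂ *ᵥ v)]

lemma dist_mulVec_sub_sub_le (B E₂ E₃ : Matrix n n ℂ) (w v v' : n → ℂ) :
    dist (B *ᵥ (w - E₂ *ᵥ v - E₃ *ᵥ 1)) (B *ᵥ (w - E₂ *ᵥ v' - E₃ *ᵥ 1)) ≤
      ‖B‖ * ‖E₂‖ * dist v v' := by
  have hdiff : B *ᵥ (w - E₂ *ᵥ v - E₃ *ᵥ 1) - B *ᵥ (w - E₂ *ᵥ v' - E₃ *ᵥ 1) =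
      B *ᵥ (E₂ *ᵥ (v' - v)) := by
    rw [← mulVec_sub, mulVec_sub E₂]
    congr 1
    abel
  rw [dist_eq_norm, hdiff, dist_comm, dist_eq_norm, mul_assoc]
  exact (linfty_opNorm_mulVec _ _).trans
    (mul_le_mul_of_nonneg_left (linfty_opNorm_mulVec _ _) (norm_nonneg B))

theorem exists_continuousOn_torusSplit_fixedPoint {L : ℝ≥0}
    (hL : LipschitzOnWith L (torusSplit : (n → ℂ) → n → ℂ) (closedBall 0 (1 / 2)))
    {B E₂ E₃ : Matrix n n ℂ} {r ε : ℝ} (h₂ : ‖E₂‖ ≤ ε) (h₃ : ‖E₃‖ ≤ ε)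
    (hr : ‖B‖ * (r + 2 * ε) ≤ 1 / 2) (hε : L * (‖B‖ * ε) ≤ 1 / 2) :
    ∃ φ : (n → ℂ) → n → ℂ, ContinuousOn φ (closedBall 0 r) ∧ ∀ w ∈ closedBall 0 r,
      ‖B *ᵥ (w - E₂ *ᵥ φ w - E₃ *ᵥ 1)‖ ≤ 1 / 2 ∧
        torusSplit (B *ᵥ (w - E₂ *ᵥ φ w - E₃ *ᵥ 1)) = φ w := by
  set x : (n → ℂ) → (n → ℂ) → n → ℂ := fun w v => B *ᵥ (w - E₂ *ᵥ v - E₃ *ᵥ 1)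
  have hx_mem : ∀ w ∈ closedBall (0 : n → ℂ) r, ∀ v ∈ closedBall (0 : n → ℂ) 1,
      x w v ∈ closedBall 0 (1 / 2) := fun w hw v hv => mem_closedBall_zero_iff.mpr <|
    (norm_mulVec_sub_sub_le h₂ h₃ (mem_closedBall_zero_iff.mp hw)
      (mem_closedBall_zero_iff.mp hv)).trans hr
  have hlip : ∀ w ∈ closedBall (0 : n → ℂ) r,
      LipschitzOnWith (1 / 2) (fun v => torusSplit (x w v)) (closedBall 0 1) :=
    fun w hw => LipschitzOnWith.of_dist_le_mul fun v hv v' hv' => by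
      refine (hL.dist_le_mul _ (hx_mem w hw v hv) _ (hx_mem w hw v' hv')).trans ?_
      calc (L : ℝ) * dist (x w v) (x w v') ≤ L * (‖B‖ * ε * dist v v') := by
            gcongr
            exact (dist_mulVec_sub_sub_le B E₂ E₃ w v v').trans (by gcongr)
        _ ≤ ((1 / 2 : ℝ≥0) : ℝ) * dist v v' := by
            rw [← mul_assoc, ← mul_assoc]
            push_cast
            gcongr
            linarith
  obtain ⟨φ, hφc, hφ⟩ := exists_continuousOn_fixedPoint (by norm_num)
    isClosed_closedBall.isComplete ⟨0, by simp⟩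
    (fun w hw v hv => mem_closedBall_zero_iff.mpr <| norm_le_one_of_forall_norm_apply_eq_one <|
      norm_torusSplit_apply (mem_closedBall_zero_iff.mp (hx_mem w hw v hv))) hlip
    (fun v hv => hL.continuousOn.comp (by fun_prop) fun w hw => hx_mem w hw v hv)
  exact ⟨φ, hφc, fun w hw =>
    ⟨mem_closedBall_zero_iff.mp (hx_mem w hw _ (hφ w hw).1), (hφ w hw).2⟩⟩

lemma div_smul_mem_closedBall {E : Type*} [NormedAddCommGroup E] [NormedSpace ℝ E]
    {a c : ℝ} (ha : 0 ≤ a) (hac : a ≤ c) {w : E} (hw : w ∈ closedBall 0 c) :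
    (a / c) • w ∈ closedBall 0 a := by
  rw [mem_closedBall_zero_iff] at *
  rw [norm_smul, Real.norm_of_nonneg (div_nonneg ha (ha.trans hac))]
  rcases (ha.trans hac).eq_or_lt with hc | hc
  · simp [← hc, ha]
  · calc a / c * ‖w‖ ≤ a / c * c := by gcongr
      _ = a := div_mul_cancel₀ a hc.ne'

lemma div_add_smul_add_div_add_smul {E : Type*} [NormedAddCommGroup E] [NormedSpace ℝ E]
    {a b : ℝ} (ha : 0 ≤ a) (hb : 0 ≤ b) {w : E} (hw : w ∈ closedBall 0 (a + b)) :
    (a / (a + b)) • w + (b / (a + b)) • w = w := by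
  rcases (add_nonneg ha hb).eq_or_lt with h | h
  · rw [← h, mem_closedBall_zero_iff, norm_le_zero_iff] at hw
    simp [hw]
  · rw [← add_smul, ← add_div, div_self h.ne', one_smul]

variable {ι : Type*}

def TorusSolvable (g : ι → Matrix n n ℂ) (s : Finset ι) (c : n → ℂ) (R : ℝ) : Prop :=
  ∃ f : ι → (n → ℂ) → n → ℂ,
    (∀ i ∈ s, ContinuousOn (f i) (closedBall 0 R)) ∧
    (∀ i ∈ s, ∀ w ∈ closedBall (0 : n → ℂ) R, ∀ j, ‖f i w j‖ = 1) ∧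
    ∀ w ∈ closedBall (0 : n → ℂ) R, ∑ i ∈ s, g i *ᵥ f i w = c + w

namespace TorusSolvable

variable {g : ι → Matrix n n ℂ}

lemma const_one (g : ι → Matrix n n ℂ) (s : Finset ι) :
    TorusSolvable g s (∑ i ∈ s, g i *ᵥ 1) 0 := by
  refine ⟨fun _ _ => 1, fun _ _ => continuousOn_const, fun _ _ _ _ _ => norm_one, fun w hw => ?_⟩
  rw [mem_closedBall_zero_iff, norm_le_zero_iff] at hw
  simp [hw]

lemma union [DecidableEq ι] {s t : Finset ι} {c c' : n → ℂ} {R R' : ℝ}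
    (h : TorusSolvable g s c R) (h' : TorusSolvable g t c' R') (hst : Disjoint s t)
    (hR : 0 ≤ R) (hR' : 0 ≤ R') : TorusSolvable g (s ∪ t) (c + c') (R + R') := by
  obtain ⟨f, hfc, hfn, hfs⟩ := h
  obtain ⟨f', hfc', hfn', hfs'⟩ := h'
  have hmem {w : n → ℂ} (hw : w ∈ closedBall 0 (R + R')) := div_smul_mem_closedBall hR
    (le_add_of_nonneg_right hR') hw
  have hmem' {w : n → ℂ} (hw : w ∈ closedBall 0 (R + R')) := div_smul_mem_closedBall hR'
    (le_add_of_nonneg_left hR) hw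
  have hnt : ∀ i ∈ t, i ∉ s := fun i hi his => Finset.disjoint_left.mp hst his hi
  set F : ι → (n → ℂ) → n → ℂ := fun i w =>
    if i ∈ s then f i ((R / (R + R')) • w) else f' i ((R' / (R + R')) • w)
  have hFs : ∀ i ∈ s, F i = fun w => f i ((R / (R + R')) • w) := fun i hi => by simp [F, hi]
  have hFt : ∀ i ∈ t, F i = fun w => f' i ((R' / (R + R')) • w) := fun i hi => by
    simp [F, hnt i hi]
  refine ⟨F, fun i hi => ?_, fun i hi w hw => ?_, fun w hw => ?_⟩
  · rcases Finset.mem_union.mp hi with hi | hi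
    · rw [hFs i hi]
      exact (hfc i hi).comp (continuous_const_smul _).continuousOn fun w hw => hmem hw
    · rw [hFt i hi]
      exact (hfc' i hi).comp (continuous_const_smul _).continuousOn fun w hw => hmem' hw
  · rcases Finset.mem_union.mp hi with hi | hi
    · rw [hFs i hi]; exact hfn i hi _ (hmem hw)
    · rw [hFt i hi]; exact hfn' i hi _ (hmem' hw)
  · have hsum_s : ∑ i ∈ s, g i *ᵥ F i w = c + (R / (R + R')) • w := by
      rw [← hfs _ (hmem hw)]
      exact Finset.sum_congr rfl fun i hi => by rw [hFs i hi]
    have hsum_t : ∑ i ∈ t, g i *ᵥ F i w = c' + (R' / (R + R')) • w := by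
      rw [← hfs' _ (hmem' hw)]
      exact Finset.sum_congr rfl fun i hi => by rw [hFt i hi]
    rw [Finset.sum_union hst, hsum_s, hsum_t]
    conv_rhs => rw [← div_add_smul_add_div_add_smul hR hR' hw]
    abel

lemma biUnion [DecidableEq ι] {κ : Type*} [DecidableEq κ] {t : Finset κ} {s : κ → Finset ι}
    {c : κ → n → ℂ} {R : κ → ℝ} (hdisj : (t : Set κ).PairwiseDisjoint s)
    (hR : ∀ k ∈ t, 0 ≤ R k) (h : ∀ k ∈ t, TorusSolvable g (s k) (c k) (R k)) :
    TorusSolvable g (t.biUnion s) (∑ k ∈ t, c k) (∑ k ∈ t, R k) := by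
  induction t using Finset.induction_on with
  | empty => simpa using const_one g ∅
  | insert a t ha ih =>
    rw [Finset.biUnion_insert, Finset.sum_insert ha, Finset.sum_insert ha]
    refine (h a (Finset.mem_insert_self a t)).union
      (ih (hdisj.subset (by simp)) (fun k hk => hR k (Finset.mem_insert_of_mem hk))
        fun k hk => h k (Finset.mem_insert_of_mem hk))
      ((Finset.disjoint_biUnion_right _ _ _).mpr fun k hk => hdisj (by simp) (by simp [hk])
        fun hak => ha (hak ▸ hk))
      (hR a (Finset.mem_insert_self a t))
      (Finset.sum_nonneg fun k hk => hR k (Finset.mem_insert_of_mem hk))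

lemma exists_polydisc_solution [Fintype ι] {c : n → ℂ} {R : ℝ}
    (h : TorusSolvable g Finset.univ c R) (hR : 1 + ‖c‖ ≤ R) :
    ∃ f : ι → ({z : n → ℂ // ∀ j, ‖z j‖ ≤ 1} → n → ℂ), (∀ i, Continuous (f i)) ∧
      (∀ i z j, ‖f i z j‖ = 1) ∧ ∀ z : {z : n → ℂ // ∀ j, ‖z j‖ ≤ 1}, ∑ i, g i *ᵥ f i z = z := by
  obtain ⟨F, hFc, hFn, hFs⟩ := h
  have hmem : ∀ z : {z : n → ℂ // ∀ j, ‖z j‖ ≤ 1}, (z : n → ℂ) - c ∈ closedBall 0 R := by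
    intro z
    rw [mem_closedBall_zero_iff]
    have hz : ‖(z : n → ℂ)‖ ≤ 1 := (pi_norm_le_iff_of_nonneg zero_le_one).mpr z.2
    linarith [norm_sub_le (z : n → ℂ) c]
  refine ⟨fun i z => F i (z - c), fun i => ?_, fun i z j => hFn i (Finset.mem_univ i) _ (hmem z) j,
    fun z => by rw [hFs _ (hmem z), add_sub_cancel]⟩
  exact (hFc i (Finset.mem_univ i)).comp_continuous
    (continuous_subtype_val.sub continuous_const) hmem

end TorusSolvable

variable [DecidableEq n] {g : ι → Matrix n n ℂ}

theorem torusSolvable_triple [DecidableEq ι] {L : ℝ≥0}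
    (hL : LipschitzOnWith L (torusSplit : (n → ℂ) → n → ℂ) (closedBall 0 (1 / 2)))
    {i j k : ι} (hij : i ≠ j) (hik : i ≠ k) (hjk : j ≠ k) {B : Matrix n n ℂ} {r ε : ℝ}
    (hB : g i * B = 1) (hj : ‖g j - g i‖ ≤ ε) (hk : ‖g k - g i‖ ≤ ε)
    (hr : ‖B‖ * (r + 2 * ε) ≤ 1 / 2) (hε : L * (‖B‖ * ε) ≤ 1 / 2) :
    TorusSolvable g {i, j, k} 0 r := by
  obtain ⟨φ, hφc, hφ⟩ := exists_continuousOn_torusSplit_fixedPoint hL hj hk hr hε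
  set x : (n → ℂ) → n → ℂ := fun w => B *ᵥ (w - (g j - g i) *ᵥ φ w - (g k - g i) *ᵥ 1)
  have hxc : ContinuousOn x (closedBall 0 r) := by fun_prop
  set F : ι → (n → ℂ) → n → ℂ := fun l w =>
    if l = i then x w - 1 - φ w else if l = j then φ w else 1
  refine ⟨F, fun l hl => ?_, fun l hl w hw a => ?_, fun w hw => ?_⟩
  · simp only [Finset.mem_insert, Finset.mem_singleton] at hl
    rcases hl with rfl | rfl | rfl
    · exact ((hxc.sub (continuousOn_const (c := (1 : n → ℂ)))).sub hφc).congr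
        fun w _ => by simp [F]
    · simpa [F, hij.symm] using hφc
    · simpa [F, hik.symm, hjk.symm] using continuousOn_const
  · obtain ⟨hx, hfix⟩ : ‖x w‖ ≤ 1 / 2 ∧ torusSplit (x w) = φ w := hφ w hw
    simp only [Finset.mem_insert, Finset.mem_singleton] at hl
    rcases hl with rfl | rfl | rfl
    · simp only [F, ↓reduceIte]
      rw [← hfix]
      exact norm_sub_torusSplit_apply hx a
    · simp only [F, if_neg hij.symm, ↓reduceIte]
      rw [← hfix]
      exact norm_torusSplit_apply hx a
    · simp [F, hik.symm, hjk.symm]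
  · have hx : g i *ᵥ x w = w - (g j - g i) *ᵥ φ w - (g k - g i) *ᵥ 1 := by
      simp only [x, mulVec_mulVec, hB, one_mulVec]
    rw [Finset.sum_insert (by simp [hij, hik]), Finset.sum_insert (by simp [hjk]),
      Finset.sum_singleton]
    simp only [F, if_neg hij.symm, if_neg hik.symm, if_neg hjk.symm, mulVec_sub, hx, sub_mulVec,
      ↓reduceIte]
    abel

theorem exists_torusSolvable_of_pairwise_close [DecidableEq ι] {L : ℝ≥0}
    (hL : LipschitzOnWith L (torusSplit : (n → ℂ) → n → ℂ) (closedBall 0 (1 / 2)))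
    {C r ε M : ℝ} (hr₀ : 0 ≤ r) (hr : C * (r + 2 * ε) ≤ 1 / 2) (hε : L * (C * ε) ≤ 1 / 2)
    (hM : 0 ≤ M) (s : Finset ι) (hinv : ∀ i ∈ s, ∃ B, g i * B = 1 ∧ ‖B‖ ≤ C)
    (hg : ∀ i ∈ s, ‖g i‖ ≤ M) (hclose : ∀ i ∈ s, ∀ j ∈ s, ‖g j - g i‖ ≤ ε) :
    ∃ c R, TorusSolvable g s c R ∧ 0 ≤ R ∧ ‖c‖ ≤ 2 * M ∧ r * ((s.card : ℝ) - 2) ≤ 3 * R := by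
  induction s using Finset.strongInduction with
  | H s ih =>
  by_cases hs : 2 < s.card
  · obtain ⟨i, hi, j, hj, k, hk, hij, hik, hjk⟩ := Finset.two_lt_card.mp hs
    have hijk : {i, j, k} ⊆ s := by simp [Finset.insert_subset_iff, hi, hj, hk]
    obtain ⟨c, R, hsol, hR, hc, hcard⟩ := ih (s \ {i, j, k})
      (Finset.sdiff_ssubset hijk (by simp)) (fun l hl => hinv l (Finset.sdiff_subset hl))
      (fun l hl => hg l (Finset.sdiff_subset hl))
      (fun l hl l' hl' => hclose l (Finset.sdiff_subset hl) l' (Finset.sdiff_subset hl'))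
    obtain ⟨B, hB, hBC⟩ := hinv i hi
    have hε₀ : 0 ≤ ε := (norm_nonneg _).trans (hclose i hi j hj)
    have htriple := torusSolvable_triple hL hij hik hjk hB (hclose i hi j hj) (hclose i hi k hk)
      (hr.trans' (by gcongr)) (hε.trans' (by gcongr))
    refine ⟨0 + c, r + R, ?_, by positivity, by simpa using hc, ?_⟩
    · rw [← Finset.union_sdiff_of_subset hijk]
      exact htriple.union hsol Finset.disjoint_sdiff hr₀ hR
    · have hcard_sdiff : ((s \ {i, j, k}).card : ℝ) = s.card - 3 := by
        rw [Finset.card_sdiff_of_subset hijk, Nat.cast_sub (Finset.card_le_card hijk),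
          Finset.card_eq_three.mpr ⟨i, j, k, hij, hik, hjk, rfl⟩]
        norm_num
      rw [hcard_sdiff] at hcard
      linarith
  · have hs : (s.card : ℝ) ≤ 2 := by exact_mod_cast not_lt.mp hs
    refine ⟨_, 0, TorusSolvable.const_one g s, le_rfl, ?_, by nlinarith⟩
    calc ‖∑ i ∈ s, g i *ᵥ 1‖ ≤ ∑ i ∈ s, M := (norm_sum_le _ _).trans <|
          Finset.sum_le_sum fun i hi => (linfty_opNorm_mulVec _ _).trans <|
            (mul_le_of_le_one_right (norm_nonneg _) pi_norm_one_le).trans (hg i hi)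
      _ ≤ 2 * M := by
          rw [Finset.sum_const, nsmul_eq_mul]
          gcongr

theorem exists_torusSolvable_univ_of_fibers_close [Fintype ι] [DecidableEq ι] {L : ℝ≥0}
    (hL : LipschitzOnWith L (torusSplit : (n → ℂ) → n → ℂ) (closedBall 0 (1 / 2)))
    {C r ε M : ℝ} (hr₀ : 0 ≤ r) (hr : C * (r + 2 * ε) ≤ 1 / 2) (hε : L * (C * ε) ≤ 1 / 2)
    (hM : 0 ≤ M) {κ : Type*} [DecidableEq κ] (t : Finset κ) (τ : ι → κ) (hτ : ∀ i, τ i ∈ t)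
    (hclose : ∀ i j, τ i = τ j → ‖g j - g i‖ ≤ ε) (hinv : ∀ i, ∃ B, g i * B = 1 ∧ ‖B‖ ≤ C)
    (hg : ∀ i, ‖g i‖ ≤ M) :
    ∃ c R, TorusSolvable g Finset.univ c R ∧ ‖c‖ ≤ 2 * t.card * M ∧
      r * (Fintype.card ι - 2 * t.card) ≤ 3 * R := by
  set fiber : κ → Finset ι := fun k => Finset.univ.filter (τ · = k)
  have hfiber : ∀ k ∈ t, ∃ c R, TorusSolvable g (fiber k) c R ∧ 0 ≤ R ∧ ‖c‖ ≤ 2 * M ∧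
      r * ((fiber k).card - 2 : ℝ) ≤ 3 * R := fun k _ =>
    exists_torusSolvable_of_pairwise_close hL hr₀ hr hε hM _ (fun i _ => hinv i) (fun i _ => hg i)
      fun i hi j hj => hclose i j <| by
        simp only [fiber, Finset.mem_filter] at hi hj
        rw [hi.2, hj.2]
  choose! c R hsol hR hc hcard using hfiber
  have hsol_univ := TorusSolvable.biUnion
    (fun k _ k' _ hkk' => Finset.disjoint_filter.mpr fun i _ hk hk' => hkk' (hk ▸ hk')) hR hsol
  rw [Finset.biUnion_filter_eq_of_maps_to fun i _ => hτ i] at hsol_univ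
  refine ⟨_, _, hsol_univ, ?_, ?_⟩
  · calc ‖∑ k ∈ t, c k‖ ≤ ∑ k ∈ t, 2 * M := norm_sum_le_of_le _ hc
      _ = 2 * t.card * M := by rw [Finset.sum_const, nsmul_eq_mul]; ring
  · calc r * (Fintype.card ι - 2 * t.card)
        = ∑ k ∈ t, r * ((fiber k).card - 2 : ℝ) := by
          rw [← Finset.card_univ, Finset.card_eq_sum_card_fiberwise fun i _ => hτ i,
            ← Finset.mul_sum, Finset.sum_sub_distrib]
          simp [fiber, mul_comm]
      _ ≤ ∑ k ∈ t, 3 * R k := Finset.sum_le_sum hcard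
      _ = 3 * ∑ k ∈ t, R k := (Finset.mul_sum _ _ _).symm

theorem IsCompact.exists_torusSolvable {K : Set (Matrix n n ℂ)} (hc : IsCompact K)
    (hK : ∀ g ∈ K, g.det ≠ 0) :
    ∃ (T : ℕ) (M r : ℝ), 0 < r ∧ ∀ (ι : Type*) [Fintype ι] (g : ι → Matrix n n ℂ),
      (∀ i, g i ∈ K) → ∃ c R, TorusSolvable g Finset.univ c R ∧ ‖c‖ ≤ 2 * T * M ∧
        r * (Fintype.card ι - 2 * T) ≤ 3 * R := by
  classical
  obtain ⟨L, hL⟩ := exists_lipschitzOnWith_torusSplit (n := n)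
  have hinv_cont : ContinuousOn (fun g : Matrix n n ℂ => g⁻¹) K := fun g hg =>
    (continuousAt_matrix_inv g (by
      simpa [Ring.inverse_eq_inv'] using continuousAt_inv₀ (hK g hg))).continuousWithinAt
  obtain ⟨C₀, hC₀⟩ := hc.exists_bound_of_continuousOn hinv_cont
  obtain ⟨M₀, hM₀⟩ := hc.exists_bound_of_continuousOn continuousOn_id
  set C := max C₀ 1
  have hC : 0 < C := lt_max_of_lt_right one_pos
  set ε : ℝ := 1 / (8 * C * (L + 1))
  have hr : C * (1 / (4 * C) + 2 * ε) ≤ 1 / 2 := by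
    simp only [ε]
    field_simp
    nlinarith [L.2]
  have hε : L * (C * ε) ≤ 1 / 2 := by
    simp only [ε]
    field_simp
    nlinarith [L.2]
  obtain ⟨t, -, ht⟩ := hc.elim_nhds_subcover (fun h => ball h (ε / 2))
    fun h _ => ball_mem_nhds h (by positivity)
  refine ⟨t.card, max M₀ 0, 1 / (4 * C), by positivity, fun ι _ g hg => ?_⟩
  choose τ hτ hgτ using fun i => mem_iUnion₂.mp (ht (hg i))
  refine exists_torusSolvable_univ_of_fibers_close hL (by positivity) hr hε (le_max_right _ _)
    t τ hτ (fun i j hij => ?_) (fun i => ⟨(g i)⁻¹, ?_, (hC₀ _ (hg i)).trans (le_max_left _ _)⟩)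
    fun i => (hM₀ _ (hg i)).trans (le_max_left _ _)
  · rw [← dist_eq_norm]
    linarith [dist_triangle_right (g j) (g i) (τ j), mem_ball.mp (hgτ j),
      hij ▸ mem_ball.mp (hgτ i)]
  · exact mul_nonsing_inv _ (isUnit_iff_ne_zero.mpr (hK _ (hg i)))

end Torus

theorem stmt12 (n : ℕ) (K : Set (Matrix (Fin n) (Fin n) ℂ))
    (hK : ∀ g ∈ K, g.det ≠ 0) (hc : IsCompact K) :
    ∃ m₀ : ℕ, 0 < m₀ ∧ ∀ m : ℕ, m₀ ≤ m →
      ∀ g : Fin m → Matrix (Fin n) (Fin n) ℂ, (∀ i, g i ∈ K) →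
        ∃ f : Fin m → ({z : Fin n → ℂ // ∀ j, ‖z j‖ ≤ 1} → (Fin n → ℂ)),
          (∀ i, Continuous (f i)) ∧
          (∀ i z j, ‖f i z j‖ = 1) ∧
          ∀ z : {z : Fin n → ℂ // ∀ j, ‖z j‖ ≤ 1},
            ∑ i, Matrix.mulVec (g i) (f i z) = (z : Fin n → ℂ) := by
  obtain ⟨T, M, r, hr, hsolve⟩ := hc.exists_torusSolvable hK
  refine ⟨⌈2 * T + 3 * (1 + 2 * T * M) / r⌉₊ + 1, Nat.succ_pos _, fun m hm g hg => ?_⟩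
  obtain ⟨c, R, hsol, hcT, hR⟩ := hsolve (Fin m) g hg
  refine hsol.exists_polydisc_solution ?_
  have hm' : 3 * (1 + 2 * T * M) / r < m - 2 * T := by
    linarith [Nat.lt_of_ceil_lt hm]
  rw [div_lt_iff₀ hr] at hm'
  rw [Fintype.card_fin] at hR
  linarith
end
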